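/- arXiv:2508.18178 — 2 statements merged into one kernel-verified Lean document; each statement's English description precedes it below -/
import Mathlib

section
/- Let U and V be real Hilbert spaces, A : U → V a bounded linear operator, D := range(A) + range(A)^⊥, and A† : D → U the Moore–Penrose generalized inverse. Let (R_α)_{α>0} be a family of continuous linear operators V → U such that R_α f → A†f as α → 0 for every f ∈ D, and suppose sup_{α>0} ‖A ∘ R_α‖ < ∞ (uniform boundedness of the operators A R_α). Then for every f ∈ V \ D and every sequence (α_n) of positive reals with α_n → 0, the norms ‖R_{α_n} f‖ tend to +∞. -/
/-!
Write `K = range A`. On the dense subspace `D = K + Kᗮ` we have `A R_α g → A A† g = g - P g`,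
where `P` is the orthogonal projection onto `Kᗮ` (a least-squares solution of `A u = a + b` with
`a ∈ K`, `b ∈ Kᗮ` satisfies `A u = a`, by Pythagoras). Since the `A R_α` are uniformly bounded,
hence equicontinuous, the convergence `A R_α f → f - P f` extends to all `f`. If `‖R_{α_n} f‖`
stayed bounded along some ultrafilter, Banach–Alaoglu would give a weak limit `u` of the
`R_{α_n} f`, and then `A u = f - P f`, i.e. `f = A u + P f ∈ D`.
-/

open scoped Topology
open Filter

/-- `u` is a least-squares solution of `A u = f`. -/
def IsLSS {U V : Type*} [NormedAddCommGroup U] [InnerProductSpace ℝ U]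
    [NormedAddCommGroup V] [InnerProductSpace ℝ V]
    (A : U →L[ℝ] V) (f : V) (u : U) : Prop :=
  ‖A u - f‖ = ⨅ w : U, ‖A w - f‖

open scoped RealInnerProductSpace

theorem ContinuousLinearMap.tendsto_apply_of_dense {𝕜 E F ι : Type*}
    [NontriviallyNormedField 𝕜] [NormedAddCommGroup E] [NormedSpace 𝕜 E]
    [NormedAddCommGroup F] [NormedSpace 𝕜 F]
    {l : Filter ι} {T : ι → E →L[𝕜] F} {M : ℝ} (hT : ∀ i, ‖T i‖ ≤ M) {s : Set E} (hs : Dense s)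
    {g : E → F} (hg : Continuous g) (h : ∀ x ∈ s, Tendsto (T · x) l (𝓝 (g x))) (x : E) :
    Tendsto (T · x) l (𝓝 (g x)) := by
  have hequi : Equicontinuous ((↑) ∘ T : ι → E → F) :=
    ((NormedSpace.equicontinuous_TFAE T).out 5 1).1 (⟨M, hT⟩ : ∃ C, ∀ i, ‖T i‖ ≤ C)
  exact hs.induction h (hequi.isClosed_setOfPred_tendsto hg) x

theorem Submodule.dense_sup_orthogonal {𝕜 E : Type*} [RCLike 𝕜] [NormedAddCommGroup E]
    [InnerProductSpace 𝕜 E] [CompleteSpace E] (K : Submodule 𝕜 E) :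
    Dense ((K ⊔ Kᗮ : Submodule 𝕜 E) : Set E) := by
  rw [Submodule.dense_iff_topologicalClosure_eq_top, Submodule.topologicalClosure_eq_top_iff,
    ← Submodule.inf_orthogonal, Submodule.inf_orthogonal_eq_bot]

section

variable {U V : Type*} [NormedAddCommGroup U] [InnerProductSpace ℝ U]
  [NormedAddCommGroup V] [InnerProductSpace ℝ V]

theorem exists_tendsto_inner_of_eventually_norm_le [CompleteSpace U] {ι : Type*}
    (F : Ultrafilter ι) {u : ι → U} {C : ℝ} (hC : ∀ᶠ i in F, ‖u i‖ ≤ C) :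
    ∃ x : U, ∀ v, Tendsto (fun i => ⟪u i, v⟫) F (𝓝 ⟪x, v⟫) := by
  let φ : ι → WeakDual ℝ U := fun i =>
    WeakDual.toStrongDual.symm (InnerProductSpace.toDual ℝ U (u i))
  have hball : ∀ᶠ i in F, φ i ∈ WeakDual.toStrongDual ⁻¹' Metric.closedBall 0 C := by
    filter_upwards [hC] with i hi
    simpa [φ] using hi
  obtain ⟨ψ, -, hψ⟩ := (WeakDual.isCompact_closedBall (0 : StrongDual ℝ U) C).ultrafilter_le_nhds
    (F.map φ) (le_principal_iff.2 hball)
  refine ⟨(InnerProductSpace.toDual ℝ U).symm (WeakDual.toStrongDual ψ), fun v => ?_⟩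
  rw [InnerProductSpace.toDual_symm_apply]
  exact (WeakDual.eval_continuous v).tendsto ψ |>.comp hψ

theorem ContinuousLinearMap.mem_range_of_tendsto_of_frequently_norm_le [CompleteSpace U]
    [CompleteSpace V] (A : U →L[ℝ] V) {ι : Type*} {l : Filter ι} {u : ι → U} {C : ℝ}
    (hC : ∃ᶠ i in l, ‖u i‖ ≤ C) {g : V} (hg : Tendsto (fun i => A (u i)) l (𝓝 g)) :
    g ∈ LinearMap.range (A : U →ₗ[ℝ] V) := by
  have := frequently_iff_neBot.1 hC
  obtain ⟨F, hF⟩ := Ultrafilter.exists_le (l ⊓ 𝓟 {i | ‖u i‖ ≤ C})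
  obtain ⟨x, hx⟩ := exists_tendsto_inner_of_eventually_norm_le F
    (le_principal_iff.1 (hF.trans inf_le_right))
  refine ⟨x, ext_inner_right ℝ fun w => tendsto_nhds_unique ?_
    ((hg.mono_left (hF.trans inf_le_left)).inner tendsto_const_nhds)⟩
  simpa only [ContinuousLinearMap.adjoint_inner_right, ContinuousLinearMap.coe_coe] using
    hx (ContinuousLinearMap.adjoint A w)

theorem IsLSS.apply_eq_of_mem_orthogonal {A : U →L[ℝ] V} {a b : V}
    (ha : a ∈ LinearMap.range (A : U →ₗ[ℝ] V)) (hb : b ∈ (LinearMap.range (A : U →ₗ[ℝ] V))ᗮ)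
    {u : U} (hu : IsLSS A (a + b) u) : A u = a := by
  obtain ⟨w₀, rfl⟩ := ha
  simp only [ContinuousLinearMap.coe_coe] at hu ⊢
  have pythagoras : ∀ w, ‖A w - (A w₀ + b)‖ ^ 2 = ‖A w - A w₀‖ ^ 2 + ‖b‖ ^ 2 := fun w => by
    have horth : ⟪A w - A w₀, b⟫ = 0 := hb _ ⟨w - w₀, by simp⟩
    rw [sub_add_eq_sub_sub, norm_sub_sq_real, horth]
    ring
  have hinf : ⨅ w, ‖A w - (A w₀ + b)‖ = ‖b‖ := by
    refine le_antisymm ((ciInf_le ⟨0, ?_⟩ w₀).trans_eq (by simp)) (le_ciInf fun w => ?_)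
    · rintro _ ⟨w, rfl⟩
      exact norm_nonneg _
    · nlinarith [pythagoras w, norm_nonneg (A w - (A w₀ + b)), norm_nonneg b]
  have h := pythagoras u
  rw [hu, hinf] at h
  simpa [sub_eq_zero] using h

theorem IsLSS.apply_eq_sub_starProjection [CompleteSpace V] {A : U →L[ℝ] V} {f : V}
    (hf : f ∈ LinearMap.range (A : U →ₗ[ℝ] V) + (LinearMap.range (A : U →ₗ[ℝ] V))ᗮ) {u : U}
    (hu : IsLSS A f u) : A u = f - (LinearMap.range (A : U →ₗ[ℝ] V))ᗮ.starProjection f := by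
  obtain ⟨a, ha, b, hb, rfl⟩ := Submodule.mem_sup.1 hf
  have hQa : (LinearMap.range (A : U →ₗ[ℝ] V))ᗮ.starProjection a = 0 :=
    (Submodule.starProjection_apply_eq_zero_iff _).2 (Submodule.le_orthogonal_orthogonal _ ha)
  have hQb : (LinearMap.range (A : U →ₗ[ℝ] V))ᗮ.starProjection b = b :=
    Submodule.starProjection_eq_self_iff.2 hb
  rw [hu.apply_eq_of_mem_orthogonal ha hb, map_add, hQa, hQb]
  abel

end

/-- If `(R_α)_{α>0}` converges pointwise to `A†` on `D = range(A) + range(A)ᗮ` as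
`α → 0` and the operators `A ∘ R_α` are uniformly bounded, then for every
`f ∈ V \ D` and every positive null sequence `(α_n)`, the norms `‖R_{α_n} f‖` tend
to `+∞`. -/
theorem stmt_8 {U V : Type*}
    [NormedAddCommGroup U] [InnerProductSpace ℝ U] [CompleteSpace U]
    [NormedAddCommGroup V] [InnerProductSpace ℝ V] [CompleteSpace V]
    (A : U →L[ℝ] V) (Adag : V → U)
    (hAdag : ∀ f ∈ (LinearMap.range (A : U →ₗ[ℝ] V) + (LinearMap.range (A : U →ₗ[ℝ] V))ᗮ : Submodule ℝ V),
      IsLSS A f (Adag f) ∧ ∀ w : U, IsLSS A f w → ‖Adag f‖ ≤ ‖w‖)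
    (R : ℝ → (V →L[ℝ] U))
    (hptw : ∀ f ∈ (LinearMap.range (A : U →ₗ[ℝ] V) + (LinearMap.range (A : U →ₗ[ℝ] V))ᗮ : Submodule ℝ V),
      Tendsto (fun α => R α f) (𝓝[>] (0 : ℝ)) (𝓝 (Adag f)))
    (hbnd : ∃ M : ℝ, ∀ α > (0 : ℝ), ‖A.comp (R α)‖ ≤ M) :
    ∀ f : V, f ∉ (LinearMap.range (A : U →ₗ[ℝ] V) + (LinearMap.range (A : U →ₗ[ℝ] V))ᗮ : Submodule ℝ V) →
      ∀ αs : ℕ → ℝ, (∀ n, 0 < αs n) → Tendsto αs atTop (𝓝 0) →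
        Tendsto (fun n => ‖R (αs n) f‖) atTop atTop := by
  intro f hf αs hpos hαs
  obtain ⟨M, hM⟩ := hbnd
  set K := LinearMap.range (A : U →ₗ[ℝ] V)
  have hαs' : Tendsto αs atTop (𝓝[>] 0) := tendsto_nhdsWithin_iff.2 ⟨hαs, .of_forall hpos⟩
  have hlim : Tendsto (fun n => A.comp (R (αs n)) f) atTop (𝓝 (f - Kᗮ.starProjection f)) := by
    refine ContinuousLinearMap.tendsto_apply_of_dense (fun n => hM _ (hpos n))
      K.dense_sup_orthogonal (g := fun x => x - Kᗮ.starProjection x) (by fun_prop)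
      (fun g hg => ?_) f
    rw [← (hAdag g hg).1.apply_eq_sub_starProjection hg]
    exact (A.continuous.tendsto _).comp ((hptw g hg).comp hαs')
  by_contra hunbdd
  simp only [tendsto_atTop, not_forall, not_eventually, not_le] at hunbdd
  obtain ⟨C, hC⟩ := hunbdd
  have hrange := A.mem_range_of_tendsto_of_frequently_norm_le (hC.mono fun _ => le_of_lt) hlim
  exact hf (by simpa using Submodule.add_mem_sup hrange (Kᗮ.starProjection_apply_mem f))
end

section
/- (Convergence of proximal gradient descent) Let H, G : ℝⁿ → ℝ ∪ {+∞} be proper, convex and lower-semicontinuous, with H real-valued, differentiable, and having L-Lipschitz continuous gradient, and set J := H + G. Assume J has a global minimizer u*. Let 0 < τ ≤ 1/L and let (u^k) be the proximal gradient iterates u^{k+1} = prox_{τG}( u^k − τ ∇H(u^k) ) from an arbitrary initial point u^0. Then for every k ≥ 1, J(u^k) − J(u*) ≤ ‖u^0 − u*‖² / (2τk). -/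
/-!
Every proximal gradient step satisfies the three-point inequality
`J(u⁺) + ‖w - u⁺‖²/(2τ) ≤ J(w) + ‖w - u‖²/(2τ)` for each `w` in the domain of `G`, where
`u⁺ = prox_{τG}(u - τ∇H(u))`: the descent lemma and `Lτ ≤ 1` bound `H(u⁺)` by the quadratic model
of `H` at `u`; the prox objective is `1/τ`-strongly convex, so its minimizer `u⁺` has quadratic
growth; and convexity of `H` bounds the linear model at `w` by `H(w)`. Taking `w = u` shows that
`J(uᵏ)` is nonincreasing, and taking `w = u*` and telescoping gives
`k (J(uᵏ) - J(u*)) ≤ ‖u⁰ - u*‖²/(2τ)`.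
-/

open scoped RealInnerProductSpace Topology
open Set Filter

section Calculus

variable {E : Type*} [NormedAddCommGroup E] [InnerProductSpace ℝ E] [CompleteSpace E]
  {f : E → ℝ} {f' : E → E}

theorem HasGradientAt.hasDerivAt_comp_add_smul {g x d : E} {t : ℝ}
    (h : HasGradientAt f g (x + t • d)) :
    HasDerivAt (fun s : ℝ => f (x + s • d)) ⟪g, d⟫ t := by
  have hline : HasDerivAt (fun s : ℝ => x + s • d) d t := by
    simpa using ((hasDerivAt_id t).smul_const d).const_add x
  have := h.hasFDerivAt.comp_hasDerivAt t hline
  simp only [InnerProductSpace.toDual_apply_apply] at this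
  exact this

theorem ConvexOn.add_inner_le_of_hasGradientAt {s : Set E} {g x w : E} (hf : ConvexOn ℝ s f)
    (hx : x ∈ s) (hw : w ∈ s) (h : HasGradientAt f g x) :
    f x + ⟪g, w - x⟫ ≤ f w := by
  have hline : ConvexOn ℝ (AffineMap.lineMap x w ⁻¹' s) (f ∘ AffineMap.lineMap (k := ℝ) x w) :=
    hf.comp_affineMap _
  have hderiv : HasDerivAt (f ∘ AffineMap.lineMap (k := ℝ) x w) ⟪g, w - x⟫ 0 := by
    have := h.hasFDerivAt.comp_hasDerivAt_of_eq (0 : ℝ)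
      (AffineMap.hasDerivAt_lineMap (a := x) (b := w)) (by simp)
    simpa using this
  have hslope := hline.le_slope_of_hasDerivAt (x := 0) (y := 1) (by simpa using hx)
    (by simpa using hw) zero_lt_one hderiv
  simp only [slope_def_field, Function.comp_apply, AffineMap.lineMap_apply_one,
    AffineMap.lineMap_apply_zero, sub_zero, div_one] at hslope
  linarith

theorem apply_add_le_of_lipschitz_gradient {L : ℝ} (hf : ∀ x, HasGradientAt f (f' x) x)
    (hlip : ∀ x y, ‖f' x - f' y‖ ≤ L * ‖x - y‖) (x d : E) :
    f (x + d) ≤ f x + ⟪f' x, d⟫ + L / 2 * ‖d‖ ^ 2 := by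
  set ψ : ℝ → ℝ := fun t => f (x + t • d) - t * ⟪f' x, d⟫ - L / 2 * t ^ 2 * ‖d‖ ^ 2
  have hψ : ∀ t, HasDerivAt ψ (⟪f' (x + t • d), d⟫ - ⟪f' x, d⟫ - L * t * ‖d‖ ^ 2) t := by
    intro t
    have := (((hf _).hasDerivAt_comp_add_smul (x := x) (d := d)).sub
      ((hasDerivAt_id t).mul_const ⟪f' x, d⟫)).sub
      (((hasDerivAt_pow 2 t).const_mul (L / 2)).mul_const (‖d‖ ^ 2))
    exact this.congr_deriv (by ring)
  have hanti : AntitoneOn ψ (Ici 0) := by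
    refine antitoneOn_of_hasDerivWithinAt_nonpos (convex_Ici 0)
      (fun t _ => (hψ t).continuousAt.continuousWithinAt) (fun t _ => (hψ t).hasDerivWithinAt) ?_
    intro t ht
    rw [interior_Ici] at ht
    have hcs : ⟪f' (x + t • d) - f' x, d⟫ ≤ ‖f' (x + t • d) - f' x‖ * ‖d‖ :=
      real_inner_le_norm _ _
    have hL : ‖f' (x + t • d) - f' x‖ ≤ L * (t * ‖d‖) := by
      simpa [norm_smul, abs_of_pos (mem_Ioi.mp ht)] using hlip (x + t • d) x
    rw [inner_sub_left] at hcs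
    nlinarith [norm_nonneg d]
  have h01 : ψ 1 ≤ ψ 0 := hanti self_mem_Ici (zero_le_one' ℝ) zero_le_one
  simp only [ψ, one_smul, one_mul, one_pow, mul_one, zero_smul, add_zero, zero_mul, sub_zero,
    ne_eq, OfNat.ofNat_ne_zero, not_false_eq_true, zero_pow, mul_zero] at h01
  linarith

end Calculus

section Convexity

variable {E : Type*} [NormedAddCommGroup E] [InnerProductSpace ℝ E]

theorem strongConvexOn_mul_norm_sub_sq {s : Set E} (hs : Convex ℝ s) (c : ℝ) (v : E) :
    StrongConvexOn s (2 * c) fun z => c * ‖z - v‖ ^ 2 := by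
  rw [strongConvexOn_iff_convex]
  have haffine : (fun z => c * ‖z - v‖ ^ 2 - 2 * c / 2 * ‖z‖ ^ 2)
      = fun z => c * ‖v‖ ^ 2 + (-(2 * c) • innerₛₗ ℝ v) z := by
    ext z
    simp only [LinearMap.smul_apply, innerₛₗ_apply_apply, smul_eq_mul, norm_sub_sq_real,
      real_inner_comm z v]
    ring
  rw [haffine]
  exact (convexOn_const _ hs).add ((-(2 * c) • innerₛₗ ℝ v).convexOn hs)

theorem UniformConvexOn.add_le_of_isMinOn {s : Set E} {φ : ℝ → ℝ} {f : E → ℝ} {p w : E}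
    (hf : UniformConvexOn s φ f) (hmin : IsMinOn f s p) (hp : p ∈ s) (hw : w ∈ s) :
    f p + φ ‖w - p‖ ≤ f w := by
  have hseg : ∀ a ∈ Ioo (0 : ℝ) 1, f p + (1 - a) * φ ‖w - p‖ ≤ f w := by
    rintro a ⟨ha0, ha1⟩
    have hmem : a • w + (1 - a) • p ∈ s := hf.1 hw hp ha0.le (by linarith) (by ring)
    have hle := (hmin hmem).trans (hf.2 hw hp ha0.le (by linarith) (by ring))
    simp only [smul_eq_mul] at hle
    nlinarith
  have hlim : Tendsto (fun a : ℝ => f p + (1 - a) * φ ‖w - p‖) (𝓝[>] 0)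
      (𝓝 (f p + φ ‖w - p‖)) := by
    have : Continuous fun a : ℝ => f p + (1 - a) * φ ‖w - p‖ := by fun_prop
    simpa using (this.tendsto 0).mono_left nhdsWithin_le_nhds
  refine le_of_tendsto hlim ?_
  filter_upwards [Ioo_mem_nhdsGT zero_lt_one] with a ha using hseg a ha

end Convexity

section ExtendedReal

theorem EReal.ne_top_of_add_coe_le {x y : EReal} {a b : ℝ} (hy : y ≠ ⊤) (h : x + a ≤ y + b) :
    x ≠ ⊤ := by
  rintro rfl
  rw [EReal.top_add_coe, top_le_iff] at h
  exact EReal.add_ne_top hy (EReal.coe_ne_top b) h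

theorem isMinOn_toReal_add {α : Type*} {G : α → EReal} {q : α → ℝ} {p : α}
    (hbot : ∀ x, G x ≠ ⊥) (hp : G p ≠ ⊤) (hmin : ∀ w, G p + q p ≤ G w + q w) :
    IsMinOn (fun z => (G z).toReal + q z) {x | G x ≠ ⊤} p := by
  intro w hw
  have h := hmin w
  rw [← EReal.coe_toReal hp (hbot p), ← EReal.coe_toReal hw (hbot w)] at h
  exact_mod_cast h

variable {E : Type*} [AddCommGroup E] [Module ℝ E] {G : E → EReal}

theorem le_coe_add_of_convex_ereal (hbot : ∀ x, G x ≠ ⊥)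
    (hconv : ∀ x y : E, ∀ t : ℝ, 0 < t → t < 1 →
      G (t • x + (1 - t) • y) ≤ (t : EReal) * G x + ((1 - t : ℝ) : EReal) * G y)
    {x y : E} (hx : G x ≠ ⊤) (hy : G y ≠ ⊤) {a b : ℝ} (ha : 0 ≤ a) (hb : 0 ≤ b)
    (hab : a + b = 1) :
    G (a • x + b • y) ≤ ((a * (G x).toReal + b * (G y).toReal : ℝ) : EReal) := by
  rcases ha.eq_or_lt with rfl | ha
  · obtain rfl : b = 1 := by linarith
    simp [EReal.coe_toReal hy (hbot y)]
  rcases hb.eq_or_lt with rfl | hb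
  · obtain rfl : a = 1 := by linarith
    simp [EReal.coe_toReal hx (hbot x)]
  obtain rfl : b = 1 - a := by linarith
  convert hconv x y a ha (by linarith) using 1
  rw [← EReal.coe_toReal hx (hbot x), ← EReal.coe_toReal hy (hbot y)]
  norm_cast

theorem convexOn_toReal_of_convex_ereal (hbot : ∀ x, G x ≠ ⊥)
    (hconv : ∀ x y : E, ∀ t : ℝ, 0 < t → t < 1 →
      G (t • x + (1 - t) • y) ≤ (t : EReal) * G x + ((1 - t : ℝ) : EReal) * G y) :
    ConvexOn ℝ {x | G x ≠ ⊤} fun x => (G x).toReal := by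
  refine ⟨fun x hx y hy a b ha hb hab => ?_, fun x hx y hy a b ha hb hab => ?_⟩
  · exact ne_top_of_le_ne_top (EReal.coe_ne_top _)
      (le_coe_add_of_convex_ereal hbot hconv hx hy ha hb hab)
  · have h := le_coe_add_of_convex_ereal hbot hconv hx hy ha hb hab
    rw [← EReal.coe_toReal (ne_top_of_le_ne_top (EReal.coe_ne_top _) h) (hbot _)] at h
    exact_mod_cast h

end ExtendedReal

theorem natCast_mul_add_le_of_add_succ_le {a d : ℕ → ℝ}
    (hstep : ∀ k, a (k + 1) + d (k + 1) ≤ d k) (hanti : ∀ k, a (k + 2) ≤ a (k + 1)) (k : ℕ) :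
    k * a k + d k ≤ d 0 := by
  induction k with
  | zero => simp
  | succ k ih =>
    have hmono : (k : ℝ) * a (k + 1) ≤ k * a k := by
      rcases k with _ | k
      · simp
      · exact mul_le_mul_of_nonneg_left (hanti k) (Nat.cast_nonneg _)
    push_cast
    linarith [hstep k]

section ProximalGradient

variable {E : Type*} [NormedAddCommGroup E] [InnerProductSpace ℝ E] [CompleteSpace E]

theorem proxGrad_three_point {f g : E → ℝ} {f' : E → E} {s : Set E} {L τ : ℝ}
    (hf : ConvexOn ℝ univ f) (hgrad : ∀ x, HasGradientAt f (f' x) x)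
    (hlip : ∀ x y, ‖f' x - f' y‖ ≤ L * ‖x - y‖) (hτ : 0 < τ) (hLτ : τ * L ≤ 1)
    (hg : ConvexOn ℝ s g) {x p w : E} (hp : p ∈ s)
    (hprox : IsMinOn (fun z => g z + 1 / (2 * τ) * ‖z - (x - τ • f' x)‖ ^ 2) s p) (hw : w ∈ s) :
    f p + g p + 1 / (2 * τ) * ‖w - p‖ ^ 2 ≤ f w + g w + 1 / (2 * τ) * ‖w - x‖ ^ 2 := by
  set c := 1 / (2 * τ) with hc
  have hdescent : f p ≤ f x + ⟪f' x, p - x⟫ + c * ‖p - x‖ ^ 2 := by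
    have hLc : L / 2 ≤ c := by rw [hc, le_div_iff₀ (by positivity)]; linarith
    have := apply_add_le_of_lipschitz_gradient hgrad hlip x (p - x)
    rw [add_sub_cancel] at this
    exact this.trans (by gcongr)
  have hsupport : f x + ⟪f' x, w - x⟫ ≤ f w :=
    hf.add_inner_le_of_hasGradientAt (mem_univ x) (mem_univ w) (hgrad x)
  have hgrowth := ((uniformConvexOn_zero.2 hg).add
    (strongConvexOn_mul_norm_sub_sq hg.1 c (x - τ • f' x))).add_le_of_isMinOn hprox hp hw
  simp only [Pi.add_apply, Pi.zero_apply, zero_add] at hgrowth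
  have hexpand : ∀ z, c * ‖z - (x - τ • f' x)‖ ^ 2
      = c * ‖z - x‖ ^ 2 + ⟪f' x, z - x⟫ + τ / 2 * ‖f' x‖ ^ 2 := by
    intro z
    rw [sub_sub_eq_add_sub, add_sub_right_comm, norm_add_sq_real, inner_smul_right, norm_smul,
      Real.norm_of_nonneg hτ.le, real_inner_comm, hc]
    field_simp
  linarith [hexpand p, hexpand w]

end ProximalGradient

theorem stmt_16_general {n : ℕ} (H : EuclideanSpace ℝ (Fin n) → ℝ)
    (G : EuclideanSpace ℝ (Fin n) → EReal)
    (gH : EuclideanSpace ℝ (Fin n) → EuclideanSpace ℝ (Fin n))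
    (hGbot : ∀ x, G x ≠ ⊥)
    (hGconv : ∀ x y : EuclideanSpace ℝ (Fin n), ∀ t : ℝ, 0 < t → t < 1 →
      G (t • x + (1 - t) • y) ≤ (t : EReal) * G x + ((1 - t : ℝ) : EReal) * G y)
    (hHconv : ConvexOn ℝ Set.univ H)
    (hgrad : ∀ x, HasGradientAt H (gH x) x)
    (L : ℝ) (hL : 0 < L)
    (hlip : ∀ x y, ‖gH x - gH y‖ ≤ L * ‖x - y‖)
    (ustar : EuclideanSpace ℝ (Fin n))
    (τ : ℝ) (hτ0 : 0 < τ) (hτL : τ ≤ 1 / L)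
    (u : ℕ → EuclideanSpace ℝ (Fin n))
    (hiter : ∀ k : ℕ, ∀ w : EuclideanSpace ℝ (Fin n),
      G (u (k + 1)) +
          ((1 / (2 * τ) * ‖u (k + 1) - (u k - τ • gH (u k))‖ ^ 2 : ℝ) : EReal) ≤
        G w + ((1 / (2 * τ) * ‖w - (u k - τ • gH (u k))‖ ^ 2 : ℝ) : EReal)) :
    ∀ k : ℕ, 1 ≤ k →
      (H (u k) : EReal) + G (u k) ≤
        (H ustar : EReal) + G ustar + ((‖u 0 - ustar‖ ^ 2 / (2 * τ * (k : ℝ)) : ℝ) : EReal) := by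
  intro k hk
  by_cases hstar : G ustar = ⊤
  · simp [hstar]
  set g := fun x => (G x).toReal
  have hdom : ∀ j, G (u (j + 1)) ≠ ⊤ := fun j => EReal.ne_top_of_add_coe_le hstar (hiter j ustar)
  have hthree : ∀ j w, G w ≠ ⊤ → H (u (j + 1)) + g (u (j + 1)) + 1 / (2 * τ) * ‖w - u (j + 1)‖ ^ 2
      ≤ H w + g w + 1 / (2 * τ) * ‖w - u j‖ ^ 2 := fun j w hw =>
    proxGrad_three_point hHconv hgrad hlip hτ0 ((le_div_iff₀ hL).mp hτL)
      (convexOn_toReal_of_convex_ereal hGbot hGconv) (hdom j)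
      (isMinOn_toReal_add hGbot (hdom j) (hiter j)) hw
  have hrate := natCast_mul_add_le_of_add_succ_le
    (a := fun j => H (u j) + g (u j) - (H ustar + g ustar))
    (d := fun j => 1 / (2 * τ) * ‖ustar - u j‖ ^ 2) (fun j => by linarith [hthree j ustar hstar])
    (fun j => by
      have hj := hthree (j + 1) (u (j + 1)) (hdom j)
      have hnn : 0 ≤ 1 / (2 * τ) * ‖u (j + 1) - u (j + 2)‖ ^ 2 := by positivity
      simp only [sub_self, norm_zero, add_assoc, Nat.reduceAdd] at hj
      linarith) k
  have hreal : H (u k) + g (u k) ≤ H ustar + g ustar + ‖u 0 - ustar‖ ^ 2 / (2 * τ * k) := by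
    have hk0 : (0 : ℝ) < k := by exact_mod_cast hk
    have hdk : 0 ≤ 1 / (2 * τ) * ‖ustar - u k‖ ^ 2 := by positivity
    rw [← sub_le_iff_le_add', norm_sub_rev, ← div_div, le_div_iff₀ hk0, div_eq_inv_mul, ← one_div]
    linarith
  obtain ⟨j, rfl⟩ := Nat.exists_eq_add_of_le' hk
  rw [← EReal.coe_toReal (hdom j) (hGbot _), ← EReal.coe_toReal hstar (hGbot _)]
  exact_mod_cast hreal

/-- Convergence of proximal gradient descent: for `J = H + G` with `H : ℝⁿ → ℝ` convex,
differentiable with `L`-Lipschitz gradient `gH`, `G : ℝⁿ → ℝ ∪ {+∞}` proper, convex,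
lsc, a global minimizer `u*` of `J`, step size `0 < τ ≤ 1/L`, and iterates
`u^{k+1} = prox_{τG}(u^k − τ gH(u^k))`, one has `J(u^k) − J(u*) ≤ ‖u⁰ − u*‖²/(2τk)` for
all `k ≥ 1` (stated as `J(u^k) ≤ J(u*) + ‖u⁰ − u*‖²/(2τk)`). -/
theorem stmt_16 {n : ℕ} (H : EuclideanSpace ℝ (Fin n) → ℝ)
    (G : EuclideanSpace ℝ (Fin n) → EReal)
    (gH : EuclideanSpace ℝ (Fin n) → EuclideanSpace ℝ (Fin n))
    (hGbot : ∀ x, G x ≠ ⊥) (hGproper : ∃ x, G x ≠ ⊤)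
    (hGconv : ∀ x y : EuclideanSpace ℝ (Fin n), ∀ t : ℝ, 0 < t → t < 1 →
      G (t • x + (1 - t) • y) ≤ (t : EReal) * G x + ((1 - t : ℝ) : EReal) * G y)
    (hGlsc : LowerSemicontinuous G)
    (hHconv : ConvexOn ℝ Set.univ H)
    (hgrad : ∀ x, HasGradientAt H (gH x) x)
    (L : ℝ) (hL : 0 < L)
    (hlip : ∀ x y, ‖gH x - gH y‖ ≤ L * ‖x - y‖)
    (ustar : EuclideanSpace ℝ (Fin n))
    (hmin : ∀ w, (H ustar : EReal) + G ustar ≤ (H w : EReal) + G w)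
    (τ : ℝ) (hτ0 : 0 < τ) (hτL : τ ≤ 1 / L)
    (u : ℕ → EuclideanSpace ℝ (Fin n))
    (hiter : ∀ k : ℕ, ∀ w : EuclideanSpace ℝ (Fin n),
      G (u (k + 1)) +
          ((1 / (2 * τ) * ‖u (k + 1) - (u k - τ • gH (u k))‖ ^ 2 : ℝ) : EReal) ≤
        G w + ((1 / (2 * τ) * ‖w - (u k - τ • gH (u k))‖ ^ 2 : ℝ) : EReal)) :
    ∀ k : ℕ, 1 ≤ k →
      (H (u k) : EReal) + G (u k) ≤
        (H ustar : EReal) + G ustar + ((‖u 0 - ustar‖ ^ 2 / (2 * τ * (k : ℝ)) : ℝ) : EReal) :=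
  stmt_16_general H G gH hGbot hGconv hHconv hgrad L hL hlip ustar τ hτ0 hτL u hiter
end
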